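/- For every q > 1, the map θ_q : H_q(K) → H_q(K̃) induced by the inclusion K ⊆ K̃ is an isomorphism. -/

import Mathlib

/-- An abstract simplicial complex on a vertex type `α`: a collection of nonempty
finite subsets of `α` closed under passing to nonempty subsets. -/
structure AbsSC (α : Type) where
  faces : Set (Finset α)
  not_empty_mem : ∅ ∉ faces
  down_closed : ∀ {s t : Finset α}, s ∈ faces → t ⊆ s → t.Nonempty → t ∈ faces

namespace AbsSC

variable {α : Type}

/-- The vertex set of an abstract simplicial complex. -/
def vertexSet (K : AbsSC α) : Set α := {v | {v} ∈ K.faces}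

/-- The type of `q`-simplices (faces with `q+1` vertices). -/
def simplices (K : AbsSC α) (q : ℕ) : Type :=
  {s : Finset α // s ∈ K.faces ∧ s.card = q + 1}

/-- The space of `q`-chains over `ℤ/2`: formal sums of `q`-simplices. -/
abbrev Chain (K : AbsSC α) (q : ℕ) : Type := K.simplices q →₀ ZMod 2

/-- The sum of the `q`-dimensional faces of a `(q+1)`-simplex. -/
noncomputable def faceChain (K : AbsSC α) (q : ℕ) (s : K.simplices (q + 1)) : K.Chain q :=
  ∑ t ∈ (s.1.powersetCard (q + 1)).attach,
    Finsupp.single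
      ⟨t.1, by
        obtain ⟨hsub, hcard⟩ := Finset.mem_powersetCard.mp t.2
        refine ⟨K.down_closed s.2.1 hsub ?_, hcard⟩
        rw [← Finset.card_pos, hcard]
        omega⟩
      (1 : ZMod 2)

/-- The boundary map `∂_{q+1} : C_{q+1}(K) → C_q(K)`, sending each `(q+1)`-simplex to
the sum of its `q`-dimensional faces. -/
noncomputable def boundary (K : AbsSC α) (q : ℕ) :
    K.Chain (q + 1) →ₗ[ZMod 2] K.Chain q :=
  Finsupp.lsum (ZMod 2) fun s => LinearMap.toSpanSingleton (ZMod 2) (K.Chain q) (K.faceChain q s)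

/-- The cycle subspace: `ker ∂_q` (all of `C_0` in degree `0`). -/
noncomputable def cycles (K : AbsSC α) : (q : ℕ) → Submodule (ZMod 2) (K.Chain q)
  | 0 => ⊤
  | q + 1 => LinearMap.ker (K.boundary q)

/-- The boundaries, viewed as a submodule of the cycles. -/
noncomputable def boundariesIn (K : AbsSC α) (q : ℕ) :
    Submodule (ZMod 2) (K.cycles q) :=
  Submodule.comap (K.cycles q).subtype (LinearMap.range (K.boundary q))

/-- The `q`-th simplicial homology over `ℤ/2`: `H_q(K) = ker ∂_q / im ∂_{q+1}`. -/
def Homology (K : AbsSC α) (q : ℕ) : Type :=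
  (K.cycles q) ⧸ (K.boundariesIn q)

noncomputable instance (K : AbsSC α) (q : ℕ) : AddCommGroup (K.Homology q) :=
  inferInstanceAs (AddCommGroup ((K.cycles q) ⧸ (K.boundariesIn q)))

noncomputable instance (K : AbsSC α) (q : ℕ) : Module (ZMod 2) (K.Homology q) :=
  inferInstanceAs (Module (ZMod 2) ((K.cycles q) ⧸ (K.boundariesIn q)))

/-- The homology class of a cycle. -/
noncomputable def hClass (K : AbsSC α) (q : ℕ) (c : K.Chain q) (hc : c ∈ K.cycles q) :
    K.Homology q :=
  Submodule.Quotient.mk ⟨c, hc⟩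

/-- The chain map induced by an inclusion of simplicial complexes. -/
noncomputable def chainMap (K L : AbsSC α) (h : K.faces ⊆ L.faces) (q : ℕ) :
    K.Chain q →ₗ[ZMod 2] L.Chain q :=
  Finsupp.lmapDomain (ZMod 2) (ZMod 2) fun s : K.simplices q =>
    (⟨s.1, h s.2.1, s.2.2⟩ : L.simplices q)

/-- `θ` is the map on `q`-th homology induced by the inclusion `K ⊆ L`: it sends the
class of every cycle `c` of `K` to the class of the image chain of `c` in `L`. -/
def InducedHom (K L : AbsSC α) (q : ℕ)
    (θ : K.Homology q →ₗ[ZMod 2] L.Homology q) : Prop :=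
  ∃ h : K.faces ⊆ L.faces,
    ∀ (c : K.Chain q) (hc : c ∈ K.cycles q),
      ∃ hc' : chainMap K L h q c ∈ L.cycles q,
        θ (K.hClass q c hc) = L.hClass q (chainMap K L h q c) hc'

end AbsSC

/-- The faces of the gluing stars `S = S_1 ⊔ ⋯ ⊔ S_k`: for each `j`, the vertex `{z j}`,
the vertices `{v}` for `v ∈ P j`, and the edges `{z j, v}` for `v ∈ P j`. -/
def starFaces {α : Type} [DecidableEq α] {k : ℕ} (P : Fin k → Set α) (z : Fin k → α) :
    Set (Finset α) :=
  {s | ∃ j : Fin k, s = {z j} ∨ ∃ v ∈ P j, s = {v} ∨ s = {z j, v}}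

section Tower

variable {W : ℕ → Type} [∀ i, AddCommGroup (W i)] [∀ i, Module (ZMod 2) (W i)]

/-- The composite `φ_{i,j} = φ_{j-1} ∘ ⋯ ∘ φ_i` of the connecting maps of a tower
(the identity when `i = j`). -/
noncomputable def comps (φ : ∀ i, W i →ₗ[ZMod 2] W (i + 1)) {i j : ℕ} (h : i ≤ j) :
    W i →ₗ[ZMod 2] W j :=
  Nat.leRecOn (C := fun m => W i →ₗ[ZMod 2] W m) h (fun {m} g => (φ m).comp g) LinearMap.id

/-- `s ∈ W b` has persistence interval `(b, d)` with finite death `d ∈ {b+1, …, n}`: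
`s ∉ im φ_{b-1}`, `φ_{b,d'}(s) ∉ im φ_{b-1,d'}` for all `b ≤ d' < d`, and
`φ_{b,d}(s) ∈ im φ_{b-1,d}`. -/
def HasPersIntervalFin (φ : ∀ i, W i →ₗ[ZMod 2] W (i + 1)) (n b d : ℕ) (s : W b) : Prop :=
  ∃ (_ : 1 ≤ b) (hbd : b < d) (_ : d ≤ n),
    s ∉ LinearMap.range (comps φ (Nat.sub_le b 1)) ∧
    (∀ (d' : ℕ) (hd' : b ≤ d'), d' < d →
      comps φ hd' s ∉ LinearMap.range (comps φ (Nat.le_trans (Nat.sub_le b 1) hd'))) ∧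
    comps φ (Nat.le_of_lt hbd) s ∈
      LinearMap.range (comps φ (Nat.le_trans (Nat.sub_le b 1) (Nat.le_of_lt hbd)))

/-- `s ∈ W b` has persistence interval `(b, ∞)`: `s ∉ im φ_{b-1}` and
`φ_{b,d'}(s) ∉ im φ_{b-1,d'}` for all `b ≤ d' ≤ n`. -/
def HasPersIntervalInf (φ : ∀ i, W i →ₗ[ZMod 2] W (i + 1)) (n b : ℕ) (s : W b) : Prop :=
  ∃ _ : 1 ≤ b,
    s ∉ LinearMap.range (comps φ (Nat.sub_le b 1)) ∧
    ∀ (d' : ℕ) (hd' : b ≤ d'), d' ≤ n →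
      comps φ hd' s ∉ LinearMap.range (comps φ (Nat.le_trans (Nat.sub_le b 1) hd'))

end Tower

/-!
The gluing stars are 1-dimensional, so `K` and `K̃` have the same simplices in every
dimension `≥ 2`. For `q ≥ 2` the inclusion is therefore a bijection on `q`- and
`(q+1)`-chains; since it commutes with the boundary and is injective on all chains,
it identifies the `q`-cycles and the `q`-boundaries of `K` with those of `K̃`.
-/

namespace AbsSC

variable {α : Type} {K L : AbsSC α} (h : K.faces ⊆ L.faces)

def inclSimplex (q : ℕ) (s : K.simplices q) : L.simplices q := ⟨s.1, h s.2.1, s.2.2⟩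

lemma inclSimplex_injective (q : ℕ) : Function.Injective (inclSimplex h q) :=
  fun _ _ hst => Subtype.ext (congrArg (fun t : L.simplices q => t.1) hst)

lemma inclSimplex_surjective {q : ℕ} (hL : ∀ s ∈ L.faces, s.card = q + 1 → s ∈ K.faces) :
    Function.Surjective (inclSimplex h q) :=
  fun s => ⟨⟨s.1, hL s.1 s.2.1 s.2.2, s.2.2⟩, rfl⟩

lemma chainMap_apply (q : ℕ) (c : K.Chain q) :
    chainMap K L h q c = Finsupp.mapDomain (inclSimplex h q) c := rfl

lemma chainMap_injective (q : ℕ) : Function.Injective (chainMap K L h q) :=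
  Finsupp.mapDomain_injective (inclSimplex_injective h q)

lemma chainMap_surjective {q : ℕ} (hL : ∀ s ∈ L.faces, s.card = q + 1 → s ∈ K.faces) :
    Function.Surjective (chainMap K L h q) :=
  Finsupp.mapDomain_surjective (inclSimplex_surjective h hL)

lemma chainMap_faceChain (q : ℕ) (s : K.simplices (q + 1)) :
    chainMap K L h q (K.faceChain q s) = L.faceChain q (inclSimplex h (q + 1) s) := by
  rw [faceChain, map_sum]
  exact Finset.sum_congr rfl fun _ _ => Finsupp.mapDomain_single

lemma boundary_single (q : ℕ) (s : K.simplices (q + 1)) (a : ZMod 2) :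
    K.boundary q (Finsupp.single s a) = a • K.faceChain q s := by
  simp [boundary]

lemma boundary_chainMap (q : ℕ) (c : K.Chain (q + 1)) :
    L.boundary q (chainMap K L h (q + 1) c) = chainMap K L h q (K.boundary q c) := by
  suffices (L.boundary q).comp (chainMap K L h (q + 1)) =
      (chainMap K L h q).comp (K.boundary q) from LinearMap.congr_fun this c
  refine Finsupp.lhom_ext fun s a => ?_
  simp only [LinearMap.comp_apply, chainMap_apply, Finsupp.mapDomain_single, boundary_single]
  rw [← chainMap_apply, map_smul, chainMap_faceChain]

lemma chainMap_mem_cycles_iff {q : ℕ} (c : K.Chain q) :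
    chainMap K L h q c ∈ L.cycles q ↔ c ∈ K.cycles q := by
  cases q with
  | zero => exact iff_of_true Submodule.mem_top Submodule.mem_top
  | succ q =>
    change L.boundary q _ = 0 ↔ K.boundary q c = 0
    rw [boundary_chainMap, map_eq_zero_iff _ (chainMap_injective h q)]

lemma chainMap_mem_range_boundary_iff {q : ℕ}
    (hL : ∀ s ∈ L.faces, s.card = q + 2 → s ∈ K.faces) (c : K.Chain q) :
    chainMap K L h q c ∈ LinearMap.range (L.boundary q) ↔
      c ∈ LinearMap.range (K.boundary q) := by
  constructor
  · rintro ⟨d, hd⟩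
    obtain ⟨e, rfl⟩ := chainMap_surjective h hL d
    rw [boundary_chainMap] at hd
    exact ⟨e, chainMap_injective h q hd⟩
  · rintro ⟨e, rfl⟩
    exact ⟨chainMap K L h (q + 1) e, boundary_chainMap h q e⟩

lemma exists_hClass_eq {q : ℕ} (x : K.Homology q) : ∃ c hc, K.hClass q c hc = x := by
  obtain ⟨⟨c, hc⟩, rfl⟩ := Submodule.Quotient.mk_surjective _ x
  exact ⟨c, hc, rfl⟩

lemma hClass_eq_zero_iff {q : ℕ} (c : K.Chain q) (hc : c ∈ K.cycles q) :
    K.hClass q c hc = 0 ↔ c ∈ LinearMap.range (K.boundary q) :=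
  Submodule.Quotient.mk_eq_zero _

theorem InducedHom.bijective {q : ℕ} {θ : K.Homology q →ₗ[ZMod 2] L.Homology q}
    (hθ : InducedHom K L q θ) (hL : ∀ s ∈ L.faces, q + 1 ≤ s.card → s ∈ K.faces) :
    Function.Bijective θ := by
  obtain ⟨h, hθ⟩ := hθ
  constructor
  · rw [injective_iff_map_eq_zero]
    intro x hx
    obtain ⟨c, hc, rfl⟩ := exists_hClass_eq x
    obtain ⟨_, hθc⟩ := hθ c hc
    rw [hθc, hClass_eq_zero_iff,
      chainMap_mem_range_boundary_iff h fun s hs hcard => hL s hs (by omega)] at hx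
    exact (hClass_eq_zero_iff c hc).mpr hx
  · intro y
    obtain ⟨c', hc', rfl⟩ := exists_hClass_eq y
    obtain ⟨c, rfl⟩ := chainMap_surjective h (fun s hs hcard => hL s hs hcard.ge) c'
    obtain ⟨_, hθc⟩ := hθ c ((chainMap_mem_cycles_iff h c).mp hc')
    exact ⟨_, hθc⟩

end AbsSC

lemma card_le_two_of_mem_starFaces {α : Type} [DecidableEq α] {k : ℕ} {P : Fin k → Set α}
    {z : Fin k → α} {s : Finset α} (hs : s ∈ starFaces P z) : s.card ≤ 2 := by
  obtain ⟨j, rfl | ⟨v, -, rfl | rfl⟩⟩ := hs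
  · simp
  · simp
  · exact Finset.card_le_two

theorem stmt8_general {α : Type} [DecidableEq α] (k : ℕ)
    (K Kt : AbsSC α)
    (P : Fin k → Set α)
    (z : Fin k → α)
    (hKt : Kt.faces = K.faces ∪ starFaces P z)
    (θ : ∀ q : ℕ, K.Homology q →ₗ[ZMod 2] Kt.Homology q)
    (hθ : ∀ q : ℕ, AbsSC.InducedHom K Kt q (θ q)) :
    ∀ q : ℕ, 1 < q → Function.Bijective (θ q) := by
  intro q hq
  refine (hθ q).bijective fun s hs hcard => ?_
  rw [hKt] at hs
  exact hs.resolve_right fun hstar => by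
    have := card_le_two_of_mem_starFaces hstar
    omega

/-- for a simplicial complex `K` with vertex set `V` partitioned into
finitely many classes `P 0, …, P (k-1)`, new vertices `z 0, …, z (k-1)` not in `V`,
and `K̃ = K ∪ S` the union of `K` with the gluing stars, for every `q > 1` the map
`θ_q : H_q(K) → H_q(K̃)` induced by the inclusion `K ⊆ K̃` is an isomorphism. -/
theorem stmt8 {α : Type} [DecidableEq α] (k : ℕ)
    (K Kt : AbsSC α)
    (P : Fin k → Set α)
    (hPne : ∀ j, (P j).Nonempty)
    (hPdisj : Pairwise (Function.onFun Disjoint P))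
    (hPunion : (⋃ j, P j) = K.vertexSet)
    (z : Fin k → α)
    (hzinj : Function.Injective z)
    (hznew : ∀ j, z j ∉ K.vertexSet)
    (hKt : Kt.faces = K.faces ∪ starFaces P z)
    (θ : ∀ q : ℕ, K.Homology q →ₗ[ZMod 2] Kt.Homology q)
    (hθ : ∀ q : ℕ, AbsSC.InducedHom K Kt q (θ q)) :
    ∀ q : ℕ, 1 < q → Function.Bijective (θ q) :=
  stmt8_general k K Kt P z hKt θ hθ
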